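/- arXiv:1004.2618 — 4 statements merged into one kernel-verified Lean document; each statement's English description precedes it below -/
import Mathlib

section
/- Let α ∈ ℂ with 0 < |α| < 1, let ε₀ > 0 and C ≥ 0, and let A, B : ℂ → ℂ satisfy |A(z)| ≤ C|z| and |B(z)| ≤ C|z| for all z with |z| < ε₀. Define φ(z₁,z₂) = (α z₁, z₂ + 1 + A(z₁) + B(z₁) z₂) and let aₙ(z₁) = (φ⁽ⁿ⁾(z₁,0))₂ − n, bₙ(z₁) = (φ⁽ⁿ⁾(z₁,1))₂ − (φ⁽ⁿ⁾(z₁,0))₂ − 1, where φ⁽ⁿ⁾ is the n-th iterate and (·)₂ the second coordinate. Then there exist ε ∈ (0, ε₀] and a constant C' < ∞ such that for every n ≥ 1, every z₁ with |z₁| < ε and every z₂ ∈ ℂ one has φ⁽ⁿ⁾(z₁,z₂) = (αⁿ z₁, z₂ + n + aₙ(z₁) + bₙ(z₁) z₂), with |aₙ(z₁)| ≤ C'|z₁|/(1−|α|)² and |bₙ(z₁)| ≤ C'|z₁|/(1−|α|). -/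
/-!
Since `φ` is affine in `z₂`, so is each iterate, and reading it off at `z₂ = 0` and `z₂ = 1` gives
the normal form for every `z₁`. The coefficients satisfy
`a (m+1) - a m = A (αᵐ z₁) + B (αᵐ z₁) (m + a m)` and `b (m+1) - b m = B (αᵐ z₁) (1 + b m)`,
so as long as `‖a m‖, ‖b m‖ ≤ 1` the increments are `O(‖z₁‖ (m + 1) ‖α‖ᵐ)`. The series
`∑ (m + 1) ‖α‖ᵐ = (1 - ‖α‖)⁻²` then bounds the coefficients, and for `‖z₁‖` small that bound is
`≤ 1`, so the a priori assumption is never violated.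
-/

open Finset

theorem sum_range_choose_mul_pow_le (j : ℕ) {r : ℝ} (hr0 : 0 ≤ r) (hr1 : r < 1) (n : ℕ) :
    ∑ k ∈ range n, ((k + j).choose j : ℝ) * r ^ k ≤ 1 / (1 - r) ^ (j + 1) :=
  sum_le_hasSum _ (fun k _ => by positivity)
    (hasSum_choose_mul_geometric_of_norm_lt_one j (by rwa [Real.norm_of_nonneg hr0]))

theorem sum_range_pow_le {r : ℝ} (hr0 : 0 ≤ r) (hr1 : r < 1) (n : ℕ) :
    ∑ k ∈ range n, r ^ k ≤ 1 / (1 - r) := by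
  simpa using sum_range_choose_mul_pow_le 0 hr0 hr1 n

theorem sum_range_succ_mul_pow_le {r : ℝ} (hr0 : 0 ≤ r) (hr1 : r < 1) (n : ℕ) :
    ∑ k ∈ range n, ((k : ℝ) + 1) * r ^ k ≤ 1 / (1 - r) ^ 2 := by
  simpa using sum_range_choose_mul_pow_le 1 hr0 hr1 n

theorem norm_le_sum_of_norm_sub_le {E : Type*} [SeminormedAddCommGroup E] {u : ℕ → E}
    {d : ℕ → ℝ} (h0 : u 0 = 0) (hd : ∀ n, ∑ k ∈ range n, d k ≤ 1)
    (hstep : ∀ m, ‖u m‖ ≤ 1 → ‖u (m + 1) - u m‖ ≤ d m) (n : ℕ) :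
    ‖u n‖ ≤ ∑ k ∈ range n, d k := by
  induction n with
  | zero => simp [h0]
  | succ m ih =>
    calc ‖u (m + 1)‖ ≤ ‖u m‖ + ‖u (m + 1) - u m‖ := norm_le_norm_add_norm_sub' _ _
      _ ≤ ∑ k ∈ range m, d k + d m := add_le_add ih (hstep m (ih.trans (hd m)))
      _ = ∑ k ∈ range (m + 1), d k := (sum_range_succ _ _).symm

theorem Function.iterate_eq_affine {R : Type*} [CommRing R] {f g h : R → R} {φ : R × R → R × R}
    (hφ : ∀ z w, φ (z, w) = (f z, g z + h z * w)) (n : ℕ) (z : R) :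
    ∃ p q : R, ∀ w, φ^[n] (z, w) = (f^[n] z, p + q * w) := by
  induction n with
  | zero => exact ⟨0, 1, fun w => by simp⟩
  | succ n ih =>
    obtain ⟨p, q, hpq⟩ := ih
    refine ⟨g (f^[n] z) + h (f^[n] z) * p, h (f^[n] z) * q, fun w => ?_⟩
    rw [Function.iterate_succ_apply', hpq, hφ, Function.iterate_succ_apply']
    congr 1
    ring

theorem norm_comp_pow_mul_le {F : ℂ → ℂ} {ε₀ C : ℝ} (hF : ∀ z : ℂ, ‖z‖ < ε₀ → ‖F z‖ ≤ C * ‖z‖)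
    {α z : ℂ} (hα : ‖α‖ ≤ 1) (hz : ‖z‖ < ε₀) (k : ℕ) :
    ‖F (α ^ k * z)‖ ≤ C * ‖z‖ * ‖α‖ ^ k := by
  have hnorm : ‖α ^ k * z‖ = ‖α‖ ^ k * ‖z‖ := by rw [norm_mul, norm_pow]
  have hshrink : ‖α ^ k * z‖ ≤ ‖z‖ := by
    rw [hnorm]
    exact mul_le_of_le_one_left (norm_nonneg z) (pow_le_one₀ (norm_nonneg α) hα)
  calc ‖F (α ^ k * z)‖ ≤ C * ‖α ^ k * z‖ := hF _ (hshrink.trans_lt hz)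
    _ = C * ‖z‖ * ‖α‖ ^ k := by rw [hnorm]; ring

section SkewProduct

variable {α : ℂ} {A B : ℂ → ℂ} {φ : ℂ × ℂ → ℂ × ℂ} {a b : ℕ → ℂ → ℂ}

theorem iterate_skew_eq
    (hφ : ∀ z₁ z₂ : ℂ, φ (z₁, z₂) = (α * z₁, z₂ + 1 + A z₁ + B z₁ * z₂))
    (ha : ∀ (n : ℕ) (z₁ : ℂ), a n z₁ = (φ^[n] (z₁, 0)).2 - (n : ℂ))
    (hb : ∀ (n : ℕ) (z₁ : ℂ), b n z₁ = (φ^[n] (z₁, 1)).2 - (φ^[n] (z₁, 0)).2 - 1)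
    (n : ℕ) (z w : ℂ) :
    φ^[n] (z, w) = (α ^ n * z, w + n + a n z + b n z * w) := by
  have hφ' : ∀ z w, φ (z, w) = (α * z, (1 + A z) + (1 + B z) * w) := fun z w => by
    rw [hφ]; congr 1; ring
  obtain ⟨p, q, hpq⟩ := Function.iterate_eq_affine hφ' n z
  rw [ha, hb, hpq, hpq, hpq, mul_left_iterate_apply]
  congr 1
  ring

theorem skew_a_succ_sub
    (hφ : ∀ z₁ z₂ : ℂ, φ (z₁, z₂) = (α * z₁, z₂ + 1 + A z₁ + B z₁ * z₂))
    (ha : ∀ (n : ℕ) (z₁ : ℂ), a n z₁ = (φ^[n] (z₁, 0)).2 - (n : ℂ))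
    (hb : ∀ (n : ℕ) (z₁ : ℂ), b n z₁ = (φ^[n] (z₁, 1)).2 - (φ^[n] (z₁, 0)).2 - 1)
    (m : ℕ) (z : ℂ) :
    a (m + 1) z - a m z = A (α ^ m * z) + B (α ^ m * z) * (m + a m z) := by
  rw [ha (m + 1), Function.iterate_succ_apply', iterate_skew_eq hφ ha hb, hφ]
  push_cast
  ring

theorem skew_b_succ_sub
    (hφ : ∀ z₁ z₂ : ℂ, φ (z₁, z₂) = (α * z₁, z₂ + 1 + A z₁ + B z₁ * z₂))
    (ha : ∀ (n : ℕ) (z₁ : ℂ), a n z₁ = (φ^[n] (z₁, 0)).2 - (n : ℂ))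
    (hb : ∀ (n : ℕ) (z₁ : ℂ), b n z₁ = (φ^[n] (z₁, 1)).2 - (φ^[n] (z₁, 0)).2 - 1)
    (m : ℕ) (z : ℂ) :
    b (m + 1) z - b m z = B (α ^ m * z) * (1 + b m z) := by
  rw [hb (m + 1), Function.iterate_succ_apply', Function.iterate_succ_apply',
    iterate_skew_eq hφ ha hb, iterate_skew_eq hφ ha hb, hφ, hφ]
  ring

theorem norm_skew_b_le
    (hφ : ∀ z₁ z₂ : ℂ, φ (z₁, z₂) = (α * z₁, z₂ + 1 + A z₁ + B z₁ * z₂))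
    (ha : ∀ (n : ℕ) (z₁ : ℂ), a n z₁ = (φ^[n] (z₁, 0)).2 - (n : ℂ))
    (hb : ∀ (n : ℕ) (z₁ : ℂ), b n z₁ = (φ^[n] (z₁, 1)).2 - (φ^[n] (z₁, 0)).2 - 1)
    {z : ℂ} {t : ℝ} (ht0 : 0 ≤ t) (hα : ‖α‖ < 1) (hB : ∀ k : ℕ, ‖B (α ^ k * z)‖ ≤ t * ‖α‖ ^ k)
    (ht : 2 * t ≤ 1 - ‖α‖) (n : ℕ) :
    ‖b n z‖ ≤ 2 * t / (1 - ‖α‖) := by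
  have hbudget : ∀ n, ∑ k ∈ range n, 2 * t * ‖α‖ ^ k ≤ 2 * t / (1 - ‖α‖) := fun n => by
    rw [← mul_sum, div_eq_mul_one_div]
    exact mul_le_mul_of_nonneg_left (sum_range_pow_le (norm_nonneg α) hα n) (by positivity)
  have hbudget_le_one : 2 * t / (1 - ‖α‖) ≤ 1 := by rwa [div_le_one (by linarith)]
  refine (norm_le_sum_of_norm_sub_le (u := fun m => b m z) (by simp [hb])
    (fun n => (hbudget n).trans hbudget_le_one) (fun m hm => ?_) n).trans (hbudget n)
  have hfactor : ‖1 + b m z‖ ≤ 2 := (norm_add_le _ _).trans (by rw [norm_one]; linarith)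
  calc ‖b (m + 1) z - b m z‖ = ‖B (α ^ m * z)‖ * ‖1 + b m z‖ := by
        rw [skew_b_succ_sub hφ ha hb, norm_mul]
    _ ≤ t * ‖α‖ ^ m * 2 := mul_le_mul (hB m) hfactor (norm_nonneg _) (by positivity)
    _ = 2 * t * ‖α‖ ^ m := by ring

theorem norm_skew_a_le
    (hφ : ∀ z₁ z₂ : ℂ, φ (z₁, z₂) = (α * z₁, z₂ + 1 + A z₁ + B z₁ * z₂))
    (ha : ∀ (n : ℕ) (z₁ : ℂ), a n z₁ = (φ^[n] (z₁, 0)).2 - (n : ℂ))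
    (hb : ∀ (n : ℕ) (z₁ : ℂ), b n z₁ = (φ^[n] (z₁, 1)).2 - (φ^[n] (z₁, 0)).2 - 1)
    {z : ℂ} {t : ℝ} (ht0 : 0 ≤ t) (hα : ‖α‖ < 1) (hA : ∀ k : ℕ, ‖A (α ^ k * z)‖ ≤ t * ‖α‖ ^ k)
    (hB : ∀ k : ℕ, ‖B (α ^ k * z)‖ ≤ t * ‖α‖ ^ k) (ht : 2 * t ≤ (1 - ‖α‖) ^ 2) (n : ℕ) :
    ‖a n z‖ ≤ 2 * t / (1 - ‖α‖) ^ 2 := by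
  have hbudget : ∀ n, ∑ k ∈ range n, 2 * t * (((k : ℝ) + 1) * ‖α‖ ^ k)
      ≤ 2 * t / (1 - ‖α‖) ^ 2 := fun n => by
    rw [← mul_sum, div_eq_mul_one_div]
    exact mul_le_mul_of_nonneg_left (sum_range_succ_mul_pow_le (norm_nonneg α) hα n)
      (by positivity)
  have hbudget_le_one : 2 * t / (1 - ‖α‖) ^ 2 ≤ 1 := by
    rwa [div_le_one (pow_pos (by linarith) 2)]
  refine (norm_le_sum_of_norm_sub_le (u := fun m => a m z) (by simp [ha])
    (fun n => (hbudget n).trans hbudget_le_one) (fun m hm => ?_) n).trans (hbudget n)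
  have hfactor : ‖(m : ℂ) + a m z‖ ≤ m + 1 :=
    (norm_add_le _ _).trans (by rw [Complex.norm_natCast]; linarith)
  have hm0 : (0 : ℝ) ≤ m := m.cast_nonneg
  calc ‖a (m + 1) z - a m z‖ ≤ ‖A (α ^ m * z)‖ + ‖B (α ^ m * z)‖ * ‖(m : ℂ) + a m z‖ := by
        rw [skew_a_succ_sub hφ ha hb, ← norm_mul]
        exact norm_add_le _ _
    _ ≤ t * ‖α‖ ^ m + t * ‖α‖ ^ m * (m + 1) :=
        add_le_add (hA m) (mul_le_mul (hB m) hfactor (norm_nonneg _) (by positivity))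
    _ ≤ 2 * t * (((m : ℝ) + 1) * ‖α‖ ^ m) := by
        nlinarith [mul_nonneg (mul_nonneg ht0 (pow_nonneg (norm_nonneg α) m)) hm0]

end SkewProduct

theorem stmt_0_general (α : ℂ) (hα1 : ‖α‖ < 1)
    (ε₀ : ℝ) (hε₀ : 0 < ε₀) (C : ℝ) (hC : 0 ≤ C)
    (A B : ℂ → ℂ)
    (hA : ∀ z : ℂ, ‖z‖ < ε₀ → ‖A z‖ ≤ C * ‖z‖)
    (hB : ∀ z : ℂ, ‖z‖ < ε₀ → ‖B z‖ ≤ C * ‖z‖)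
    (φ : ℂ × ℂ → ℂ × ℂ)
    (hφ : ∀ z₁ z₂ : ℂ, φ (z₁, z₂) = (α * z₁, z₂ + 1 + A z₁ + B z₁ * z₂))
    (a b : ℕ → ℂ → ℂ)
    (ha : ∀ (n : ℕ) (z₁ : ℂ), a n z₁ = (φ^[n] (z₁, 0)).2 - (n : ℂ))
    (hb : ∀ (n : ℕ) (z₁ : ℂ),
      b n z₁ = (φ^[n] (z₁, 1)).2 - (φ^[n] (z₁, 0)).2 - 1) :
    ∃ ε : ℝ, 0 < ε ∧ ε ≤ ε₀ ∧ ∃ C' : ℝ,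
      ∀ n : ℕ, 1 ≤ n → ∀ z₁ : ℂ, ‖z₁‖ < ε → ∀ z₂ : ℂ,
        φ^[n] (z₁, z₂) = (α ^ n * z₁, z₂ + (n : ℂ) + a n z₁ + b n z₁ * z₂) ∧
        ‖a n z₁‖ ≤ C' * ‖z₁‖ / (1 - ‖α‖) ^ 2 ∧
        ‖b n z₁‖ ≤ C' * ‖z₁‖ / (1 - ‖α‖) := by
  have hgap : 0 < 1 - ‖α‖ := by linarith
  refine ⟨min ε₀ ((1 - ‖α‖) ^ 2 / (2 * C + 1)), lt_min hε₀ (by positivity), min_le_left _ _,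
    2 * C, fun n _ z₁ hz₁ z₂ => ?_⟩
  have hz₀ : ‖z₁‖ < ε₀ := hz₁.trans_le (min_le_left _ _)
  have hsmall : 2 * (C * ‖z₁‖) ≤ (1 - ‖α‖) ^ 2 := by
    have := (lt_div_iff₀ (by positivity)).1 (hz₁.trans_le (min_le_right _ _))
    nlinarith [norm_nonneg z₁]
  have hsmall' : 2 * (C * ‖z₁‖) ≤ 1 - ‖α‖ := hsmall.trans (by nlinarith [norm_nonneg α])
  have ht0 : 0 ≤ C * ‖z₁‖ := by positivity
  have hAk := norm_comp_pow_mul_le hA hα1.le hz₀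
  have hBk := norm_comp_pow_mul_le hB hα1.le hz₀
  refine ⟨iterate_skew_eq hφ ha hb n z₁ z₂, ?_, ?_⟩
  · simpa only [mul_assoc] using norm_skew_a_le hφ ha hb ht0 hα1 hAk hBk hsmall n
  · simpa only [mul_assoc] using norm_skew_b_le hφ ha hb ht0 hα1 hBk hsmall' n

/-- Normal-form part of Lemma `action-lem`: the `n`-th iterate of
`φ(z₁,z₂) = (α z₁, z₂ + 1 + A(z₁) + B(z₁) z₂)` has the affine normal form
`φ⁽ⁿ⁾(z₁,z₂) = (αⁿ z₁, z₂ + n + aₙ(z₁) + bₙ(z₁) z₂)` with the stated estimates. -/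
theorem stmt_0 (α : ℂ) (hα0 : 0 < ‖α‖) (hα1 : ‖α‖ < 1)
    (ε₀ : ℝ) (hε₀ : 0 < ε₀) (C : ℝ) (hC : 0 ≤ C)
    (A B : ℂ → ℂ)
    (hA : ∀ z : ℂ, ‖z‖ < ε₀ → ‖A z‖ ≤ C * ‖z‖)
    (hB : ∀ z : ℂ, ‖z‖ < ε₀ → ‖B z‖ ≤ C * ‖z‖)
    (φ : ℂ × ℂ → ℂ × ℂ)
    (hφ : ∀ z₁ z₂ : ℂ, φ (z₁, z₂) = (α * z₁, z₂ + 1 + A z₁ + B z₁ * z₂))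
    (a b : ℕ → ℂ → ℂ)
    (ha : ∀ (n : ℕ) (z₁ : ℂ), a n z₁ = (φ^[n] (z₁, 0)).2 - (n : ℂ))
    (hb : ∀ (n : ℕ) (z₁ : ℂ),
      b n z₁ = (φ^[n] (z₁, 1)).2 - (φ^[n] (z₁, 0)).2 - 1) :
    ∃ ε : ℝ, 0 < ε ∧ ε ≤ ε₀ ∧ ∃ C' : ℝ,
      ∀ n : ℕ, 1 ≤ n → ∀ z₁ : ℂ, ‖z₁‖ < ε → ∀ z₂ : ℂ,
        φ^[n] (z₁, z₂) = (α ^ n * z₁, z₂ + (n : ℂ) + a n z₁ + b n z₁ * z₂) ∧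
        ‖a n z₁‖ ≤ C' * ‖z₁‖ / (1 - ‖α‖) ^ 2 ∧
        ‖b n z₁‖ ≤ C' * ‖z₁‖ / (1 - ‖α‖) :=
  stmt_0_general α hα1 ε₀ hε₀ C hC A B hA hB φ hφ a b ha hb
end

section
/- Let α ∈ ℂ with 0 < |α| < 1, let ε₀ > 0 and C ≥ 0, and let A, B : ℂ → ℂ satisfy |A(z)| ≤ C|z| and |B(z)| ≤ C|z| for |z| < ε₀. Define φ(z₁,z₂) = (α z₁, z₂ + 1 + A(z₁) + B(z₁) z₂). Then for every n ≥ 1 there exist functions A_{n,k}, B_{n,k} : ℂ → ℂ (1 ≤ k ≤ n) such that for all z₁ with |z₁| < ε₀ and all z₂ ∈ ℂ the second component of the n-th iterate satisfies (φ⁽ⁿ⁾(z₁,z₂))₂ = z₂ + n + Σ_{k=1}^{n} [ k·A_{n,k}(z₁) + z₂·B_{n,k}(z₁) ], with the estimates |A_{n,k}(z₁)| ≤ C |α|^{k−1} (∏_{j=1}^{n−1} (1 + C|α|^{j}|z₁|)) |z₁| and |B_{n,k}(z₁)| ≤ C |α|^{k−1} (∏_{j=1}^{n−1} (1 + C|α|^{j}|z₁|))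 |z₁| for all 1 ≤ k ≤ n. -/
/-!
Write `a m = A (α ^ m * z₁)`, `b m = B (α ^ m * z₁)` and `P k = ∏_{k ≤ j < n} (1 + b j)`.
The second coordinate of the orbit obeys the affine recursion `w ↦ (1 + b m) * w + (1 + a m)`, so
`(φ^[n] (z₁, z₂)).2 = z₂ * P 0 + ∑_{i < n} (1 + a i) * P (i + 1)`. Telescoping
`P i - P (i + 1) = b i * P (i + 1)` gives `P 0 = 1 + ∑ b i * P (i + 1)` and, after summation by parts,
`∑ P (i + 1) = n + ∑ i * b i * P (i + 1)`. Hence one may take `B_{n,k} = b (k - 1) * P k` and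
`k * A_{n,k} = (a (k - 1) + (k - 1) * b (k - 1)) * P k`. As `‖α‖ ≤ 1`, every `α ^ j * z₁` stays in the
disc of radius `ε₀`, so `‖a j‖, ‖b j‖ ≤ C * ‖α‖ ^ j * ‖z₁‖`, and `‖P k‖` is bounded by the product
in the statement.
-/

open Finset

theorem eq_mul_prod_add_sum_of_succ_eq {R : Type*} [CommSemiring R] {w c d : ℕ → R}
    (h : ∀ m, w (m + 1) = c m * w m + d m) (m : ℕ) :
    w m = w 0 * ∏ j ∈ range m, c j + ∑ i ∈ range m, d i * ∏ j ∈ Ico (i + 1) m, c j := by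
  induction m with
  | zero => simp
  | succ m ih =>
    have hstep : ∀ i ∈ range m,
        d i * ∏ j ∈ Ico (i + 1) (m + 1), c j = (d i * ∏ j ∈ Ico (i + 1) m, c j) * c m := by
      intro i hi
      rw [prod_Ico_succ_top (mem_range.mp hi), mul_assoc]
    rw [h, ih, sum_range_succ, sum_congr rfl hstep, ← sum_mul, prod_range_succ, Ico_self,
      prod_empty]
    ring

section TailProduct

variable {R : Type*} [CommRing R]

theorem sum_range_succ_eq_mul_add_sum_mul_sub (P : ℕ → R) (n : ℕ) :
    ∑ i ∈ range n, P (i + 1) = n * P n + ∑ i ∈ range n, i * (P i - P (i + 1)) := by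
  induction n with
  | zero => simp
  | succ n ih =>
    rw [sum_range_succ, ih, sum_range_succ]
    push_cast
    ring

theorem prod_Ico_one_add_sub_succ (b : ℕ → R) {i n : ℕ} (hi : i < n) :
    ∏ j ∈ Ico i n, (1 + b j) - ∏ j ∈ Ico (i + 1) n, (1 + b j) =
      b i * ∏ j ∈ Ico (i + 1) n, (1 + b j) := by
  rw [prod_eq_prod_Ico_succ_bot hi]
  ring

theorem prod_range_one_add_eq (b : ℕ → R) (n : ℕ) :
    ∏ j ∈ range n, (1 + b j) = 1 + ∑ i ∈ range n, b i * ∏ j ∈ Ico (i + 1) n, (1 + b j) := by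
  have htel := sum_range_sub' (fun i => ∏ j ∈ Ico i n, (1 + b j)) n
  rw [sum_congr rfl fun i hi => prod_Ico_one_add_sub_succ b (mem_range.mp hi), Ico_self,
    prod_empty, ← range_eq_Ico] at htel
  rw [htel]
  ring

theorem sum_range_prod_Ico_one_add_eq (b : ℕ → R) (n : ℕ) :
    ∑ i ∈ range n, ∏ j ∈ Ico (i + 1) n, (1 + b j) =
      n + ∑ i ∈ range n, i * (b i * ∏ j ∈ Ico (i + 1) n, (1 + b j)) := by
  rw [sum_range_succ_eq_mul_add_sum_mul_sub (fun i => ∏ j ∈ Ico i n, (1 + b j)), Ico_self,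
    prod_empty, mul_one]
  congr 1
  exact sum_congr rfl fun i hi => by rw [prod_Ico_one_add_sub_succ b (mem_range.mp hi)]

theorem mul_prod_range_add_sum_eq (a b : ℕ → R) (z : R) (n : ℕ) :
    z * ∏ j ∈ range n, (1 + b j) + ∑ i ∈ range n, (1 + a i) * ∏ j ∈ Ico (i + 1) n, (1 + b j) =
      z + n + ∑ i ∈ range n, ((a i + i * b i) * ∏ j ∈ Ico (i + 1) n, (1 + b j) +
        z * (b i * ∏ j ∈ Ico (i + 1) n, (1 + b j))) := by
  simp only [add_mul, one_mul, sum_add_distrib, prod_range_one_add_eq b n,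
    sum_range_prod_Ico_one_add_eq b n, mul_add, mul_one, mul_sum, mul_assoc]
  ring

end TailProduct

theorem sum_Icc_one_eq_sum_range {M : Type*} [AddCommMonoid M] (f : ℕ → M) (n : ℕ) :
    ∑ k ∈ Icc 1 n, f k = ∑ i ∈ range n, f (i + 1) := by
  rw [range_eq_Ico, sum_Ico_add', zero_add, Ico_add_one_right_eq_Icc]

theorem norm_prod_one_add_le {ι 𝕜 : Type*} [NormedCommRing 𝕜] [NormOneClass 𝕜] (s : Finset ι)
    {b : ι → 𝕜} {β : ι → ℝ} (h : ∀ i ∈ s, ‖b i‖ ≤ β i) :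
    ‖∏ i ∈ s, (1 + b i)‖ ≤ ∏ i ∈ s, (1 + β i) :=
  (Finset.norm_prod_le s _).trans <| prod_le_prod (fun _ _ => norm_nonneg _) fun i hi =>
    (norm_add_le _ _).trans <| by rw [norm_one]; exact add_le_add_right (h i hi) 1

theorem norm_inv_natCast_succ_mul_add_le {𝕜 : Type*} [RCLike 𝕜] {x y : 𝕜} {M : ℝ}
    (hx : ‖x‖ ≤ M) (hy : ‖y‖ ≤ M) (m : ℕ) :
    ‖((m + 1 : ℕ) : 𝕜)⁻¹ * (x + m * y)‖ ≤ M := by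
  have hM : 0 ≤ M := (norm_nonneg x).trans hx
  have hsum : ‖x + m * y‖ ≤ (m + 1) * M := calc
    ‖x + m * y‖ ≤ ‖x‖ + m * ‖y‖ := by
      simpa only [norm_mul, RCLike.norm_natCast] using norm_add_le x (m * y)
    _ ≤ M + m * M := by gcongr
    _ = (m + 1) * M := by ring
  rw [norm_mul, norm_inv, RCLike.norm_natCast, Nat.cast_succ, inv_mul_le_iff₀ (by positivity)]
  exact hsum

theorem norm_comp_pow_mul_le_s2 {𝕜 E : Type*} [NormedField 𝕜] [SeminormedAddGroup E] {f : 𝕜 → E}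
    {ε C : ℝ} (hf : ∀ z, ‖z‖ < ε → ‖f z‖ ≤ C * ‖z‖) {α z : 𝕜} (hα : ‖α‖ ≤ 1) (hz : ‖z‖ < ε)
    (j : ℕ) : ‖f (α ^ j * z)‖ ≤ C * ‖α‖ ^ j * ‖z‖ := by
  have hsmall : ‖α ^ j * z‖ ≤ ‖z‖ := by
    rw [norm_mul, norm_pow]
    exact mul_le_of_le_one_left (norm_nonneg z) (pow_le_one₀ (norm_nonneg α) hα)
  simpa only [norm_mul, norm_pow, mul_assoc] using hf _ (hsmall.trans_lt hz)

section SkewProduct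

variable {α : ℂ} {A B : ℂ → ℂ} {φ : ℂ × ℂ → ℂ × ℂ}

theorem iterate_fst_eq (hφ : ∀ z₁ z₂ : ℂ, φ (z₁, z₂) = (α * z₁, z₂ + 1 + A z₁ + B z₁ * z₂))
    (m : ℕ) (z : ℂ × ℂ) : (φ^[m] z).1 = α ^ m * z.1 := by
  induction m with
  | zero => simp
  | succ m ih =>
    have hstep := hφ (φ^[m] z).1 (φ^[m] z).2
    rw [Function.iterate_succ_apply', ← Prod.mk.eta (p := φ^[m] z), hstep, ih, pow_succ',
      mul_assoc]

theorem iterate_snd_eq (hφ : ∀ z₁ z₂ : ℂ, φ (z₁, z₂) = (α * z₁, z₂ + 1 + A z₁ + B z₁ * z₂))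
    (m : ℕ) (z₁ z₂ : ℂ) :
    (φ^[m] (z₁, z₂)).2 = z₂ * ∏ j ∈ range m, (1 + B (α ^ j * z₁)) +
      ∑ i ∈ range m, (1 + A (α ^ i * z₁)) * ∏ j ∈ Ico (i + 1) m, (1 + B (α ^ j * z₁)) := by
  refine eq_mul_prod_add_sum_of_succ_eq (w := fun m => (φ^[m] (z₁, z₂)).2) (fun m => ?_) m
  have hstep := hφ (φ^[m] (z₁, z₂)).1 (φ^[m] (z₁, z₂)).2
  rw [Prod.mk.eta, iterate_fst_eq hφ] at hstep
  simp only [Function.iterate_succ_apply', hstep]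
  ring

end SkewProduct

theorem stmt_2_general (α : ℂ) (hα1 : ‖α‖ < 1)
    (ε₀ : ℝ) (C : ℝ) (hC : 0 ≤ C)
    (A B : ℂ → ℂ)
    (hA : ∀ z : ℂ, ‖z‖ < ε₀ → ‖A z‖ ≤ C * ‖z‖)
    (hB : ∀ z : ℂ, ‖z‖ < ε₀ → ‖B z‖ ≤ C * ‖z‖)
    (φ : ℂ × ℂ → ℂ × ℂ)
    (hφ : ∀ z₁ z₂ : ℂ, φ (z₁, z₂) = (α * z₁, z₂ + 1 + A z₁ + B z₁ * z₂)) :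
    ∀ n : ℕ, 1 ≤ n → ∃ An Bn : ℕ → ℂ → ℂ,
      (∀ z₁ : ℂ, ‖z₁‖ < ε₀ → ∀ z₂ : ℂ,
        (φ^[n] (z₁, z₂)).2 =
          z₂ + (n : ℂ) + ∑ k ∈ Finset.Icc 1 n, ((k : ℂ) * An k z₁ + z₂ * Bn k z₁)) ∧
      (∀ z₁ : ℂ, ‖z₁‖ < ε₀ → ∀ k : ℕ, 1 ≤ k → k ≤ n →
        ‖An k z₁‖ ≤
          C * ‖α‖ ^ (k - 1) *
            (∏ j ∈ Finset.Icc 1 (n - 1), (1 + C * ‖α‖ ^ j * ‖z₁‖)) *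
            ‖z₁‖ ∧
        ‖Bn k z₁‖ ≤
          C * ‖α‖ ^ (k - 1) *
            (∏ j ∈ Finset.Icc 1 (n - 1), (1 + C * ‖α‖ ^ j * ‖z₁‖)) *
            ‖z₁‖) := by
  intro n _
  set P : ℂ → ℕ → ℂ := fun z₁ k => ∏ j ∈ Ico k n, (1 + B (α ^ j * z₁)) with hP
  refine ⟨fun k z₁ =>
      (k : ℂ)⁻¹ * (A (α ^ (k - 1) * z₁) + ((k - 1 : ℕ) : ℂ) * B (α ^ (k - 1) * z₁)) * P z₁ k,
    fun k z₁ => B (α ^ (k - 1) * z₁) * P z₁ k, fun z₁ _ z₂ => ?_, fun z₁ hz₁ k hk1 hkn => ?_⟩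
  · rw [iterate_snd_eq hφ, mul_prod_range_add_sum_eq, sum_Icc_one_eq_sum_range]
    refine congrArg _ (sum_congr rfl fun i _ => ?_)
    simp only [hP, Nat.add_sub_cancel]
    field_simp
  · obtain ⟨i, rfl⟩ := Nat.exists_eq_add_of_le' hk1
    have ha := norm_comp_pow_mul_le_s2 hA hα1.le hz₁
    have hb := norm_comp_pow_mul_le_s2 hB hα1.le hz₁
    have hPle : ‖P z₁ (i + 1)‖ ≤ ∏ j ∈ Icc 1 (n - 1), (1 + C * ‖α‖ ^ j * ‖z₁‖) := by
      refine (norm_prod_one_add_le _ fun j _ => hb j).trans <|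
        prod_le_prod_of_subset_of_one_le (fun j => by simp only [mem_Ico, mem_Icc]; omega)
          (fun j _ => by positivity) fun j _ _ => le_add_of_nonneg_right (by positivity)
    simp only [Nat.add_sub_cancel]
    rw [mul_right_comm (C * ‖α‖ ^ i) _ ‖z₁‖]
    exact ⟨(norm_mul _ _).trans_le <| mul_le_mul (norm_inv_natCast_succ_mul_add_le (ha i) (hb i) i)
        hPle (norm_nonneg _) (by positivity),
      (norm_mul _ _).trans_le <| mul_le_mul (hb i) hPle (norm_nonneg _) (by positivity)⟩

/-- The inductive decomposition (formulas (action5)–(action6)) inside Lemma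
`action-lem`: the second component of the `n`-th iterate of
`φ(z₁,z₂) = (α z₁, z₂ + 1 + A(z₁) + B(z₁) z₂)` decomposes as
`z₂ + n + Σ_{k=1}^n [k A_{n,k}(z₁) + z₂ B_{n,k}(z₁)]` with the stated estimates. -/
theorem stmt_2 (α : ℂ) (hα0 : 0 < ‖α‖) (hα1 : ‖α‖ < 1)
    (ε₀ : ℝ) (hε₀ : 0 < ε₀) (C : ℝ) (hC : 0 ≤ C)
    (A B : ℂ → ℂ)
    (hA : ∀ z : ℂ, ‖z‖ < ε₀ → ‖A z‖ ≤ C * ‖z‖)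
    (hB : ∀ z : ℂ, ‖z‖ < ε₀ → ‖B z‖ ≤ C * ‖z‖)
    (φ : ℂ × ℂ → ℂ × ℂ)
    (hφ : ∀ z₁ z₂ : ℂ, φ (z₁, z₂) = (α * z₁, z₂ + 1 + A z₁ + B z₁ * z₂)) :
    ∀ n : ℕ, 1 ≤ n → ∃ An Bn : ℕ → ℂ → ℂ,
      (∀ z₁ : ℂ, ‖z₁‖ < ε₀ → ∀ z₂ : ℂ,
        (φ^[n] (z₁, z₂)).2 =
          z₂ + (n : ℂ) + ∑ k ∈ Finset.Icc 1 n, ((k : ℂ) * An k z₁ + z₂ * Bn k z₁)) ∧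
      (∀ z₁ : ℂ, ‖z₁‖ < ε₀ → ∀ k : ℕ, 1 ≤ k → k ≤ n →
        ‖An k z₁‖ ≤
          C * ‖α‖ ^ (k - 1) *
            (∏ j ∈ Finset.Icc 1 (n - 1), (1 + C * ‖α‖ ^ j * ‖z₁‖)) *
            ‖z₁‖ ∧
        ‖Bn k z₁‖ ≤
          C * ‖α‖ ^ (k - 1) *
            (∏ j ∈ Finset.Icc 1 (n - 1), (1 + C * ‖α‖ ^ j * ‖z₁‖)) *
            ‖z₁‖) :=
  stmt_2_general α hα1 ε₀ C hC A B hA hB φ hφ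
end

section
/- For every ε with 0 < ε < 1 there exists α₀ > 0 such that for all α ≥ α₀ one has D⁺_{ε,α} ⊆ H²_ε, where D⁺_{ε,α} = {(z₁,z₂) ∈ ℂ² : |z₁| < 1, |z₂| < 1, |z₁|² < ε²/4 + (1 − ε²/4)|z₂|^{2α}} and H²_ε = {(z₁,z₂) : |z₁| < ε, |z₂| < 1} ∪ {(z₁,z₂) : |z₁| < 1, 1 − ε < |z₂| < 1}. -/
/-! If `‖z₂‖ ≤ 1 - ε`, then `‖z₂‖ ^ (2α) ≤ (1 - ε) ^ (2α)` is below `3ε²/4` once `α` is large,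
and then the defining inequality of `D⁺_{ε,α}` forces `‖z₁‖² < ε²/4 + 3ε²/4 = ε²`.
Otherwise `z` lies in the annular part of the Hartogs figure. -/

open Filter Set Topology

lemma eventually_forall_rpow_lt_of_lt_one {r c : ℝ} (hr : r < 1) (hc : 0 < c) :
    ∀ᶠ α : ℝ in atTop, ∀ t ∈ Icc 0 r, t ^ α < c := by
  have hb : Tendsto (fun α : ℝ => max r 0 ^ α) atTop (𝓝 0) :=
    tendsto_rpow_atTop_of_base_lt_one _ (by linarith [le_max_right r 0]) (max_lt hr one_pos)
  filter_upwards [hb.eventually (eventually_lt_nhds hc), eventually_ge_atTop 0]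
    with α hbα hα t ⟨ht0, htr⟩
  exact (Real.rpow_le_rpow ht0 (le_max_of_le_left htr) hα).trans_lt hbα

lemma lt_of_sq_lt_quarter_sq_add {a ε s : ℝ} (hε : 0 < ε) (hs0 : 0 ≤ s)
    (hs : s ≤ 3 * ε ^ 2 / 4) (h : a ^ 2 < ε ^ 2 / 4 + (1 - ε ^ 2 / 4) * s) : a < ε := by
  have hsq : a ^ 2 < ε ^ 2 := by nlinarith [sq_nonneg ε]
  exact lt_of_pow_lt_pow_left₀ 2 hε.le hsq

theorem stmt_4_general (ε : ℝ) (hε0 : 0 < ε) :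
    ∃ α₀ : ℝ, 0 < α₀ ∧ ∀ α : ℝ, α₀ ≤ α →
      {z : ℂ × ℂ | ‖z.1‖ < 1 ∧ ‖z.2‖ < 1 ∧
          ‖z.1‖ ^ 2 <
            ε ^ 2 / 4 + (1 - ε ^ 2 / 4) * ‖z.2‖ ^ (2 * α)} ⊆
        {z : ℂ × ℂ | ‖z.1‖ < ε ∧ ‖z.2‖ < 1} ∪
        {z : ℂ × ℂ | ‖z.1‖ < 1 ∧
          1 - ε < ‖z.2‖ ∧ ‖z.2‖ < 1} := by
  have hsmall : ∀ᶠ α : ℝ in atTop, ∀ t ∈ Icc 0 (1 - ε), t ^ (2 * α) < 3 * ε ^ 2 / 4 :=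
    (tendsto_id.const_mul_atTop two_pos).eventually
      (eventually_forall_rpow_lt_of_lt_one (by linarith) (by positivity))
  obtain ⟨α₀, hα₀⟩ := eventually_atTop.1 hsmall
  refine ⟨max α₀ 1, by positivity, fun α hα z ⟨hz1, hz2, hz3⟩ => ?_⟩
  by_cases hann : 1 - ε < ‖z.2‖
  · exact Or.inr ⟨hz1, hann, hz2⟩
  · have hpow := hα₀ α (le_of_max_le_left hα) ‖z.2‖ ⟨norm_nonneg _, not_lt.1 hann⟩
    exact Or.inl ⟨lt_of_sq_lt_quarter_sq_add hε0 (Real.rpow_nonneg (norm_nonneg _) _) hpow.le hz3,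
      hz2⟩

/-- First assertion of part (ii) of Lemma `exhaust-l1`: for `α` big enough the
domain `D⁺_{ε,α}` is contained in the Hartogs figure `H²_ε`. -/
theorem stmt_4 (ε : ℝ) (hε0 : 0 < ε) (hε1 : ε < 1) :
    ∃ α₀ : ℝ, 0 < α₀ ∧ ∀ α : ℝ, α₀ ≤ α →
      {z : ℂ × ℂ | ‖z.1‖ < 1 ∧ ‖z.2‖ < 1 ∧
          ‖z.1‖ ^ 2 <
            ε ^ 2 / 4 + (1 - ε ^ 2 / 4) * ‖z.2‖ ^ (2 * α)} ⊆
        {z : ℂ × ℂ | ‖z.1‖ < ε ∧ ‖z.2‖ < 1} ∪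
        {z : ℂ × ℂ | ‖z.1‖ < 1 ∧
          1 - ε < ‖z.2‖ ∧ ‖z.2‖ < 1} :=
  stmt_4_general ε hε0
end

section
/- Let X be a connected, locally connected, metrizable topological space, Y a Hausdorff topological space, and p : X → Y a local homeomorphism. Let G be the set of all homeomorphisms g : X → X with p ∘ g = p. Then G acts properly discontinuously on X: for every pair of compact subsets K₁, K₂ ⊆ X, the set { g ∈ G : g(K₁) ∩ K₂ ≠ ∅ } is finite. -/
open Filter Topology

/-- Topological core of Theorem `prop-disc-hyp`: the group of deck
transformations of a Riemann domain (homeomorphisms `g` with `p ∘ g = p`)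
acts properly discontinuously. -/
theorem stmt_9 {X Y : Type*} [TopologicalSpace X] [TopologicalSpace Y]
    [ConnectedSpace X] [LocallyConnectedSpace X]
    [TopologicalSpace.MetrizableSpace X] [T2Space Y]
    (p : X → Y) (hp : IsLocalHomeomorph p)
    (K₁ K₂ : Set X) (hK₁ : IsCompact K₁) (hK₂ : IsCompact K₂) :
    {g : X ≃ₜ X | p ∘ g = p ∧ ((g : X → X) '' K₁ ∩ K₂).Nonempty}.Finite := by
  letI := TopologicalSpace.metrizableSpaceMetric X
  by_contra hinf
  replace hinf : {g : X ≃ₜ X | p ∘ g = p ∧ ((g : X → X) '' K₁ ∩ K₂).Nonempty}.Infinite := hinf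
  set S := {g : X ≃ₜ X | p ∘ g = p ∧ ((g : X → X) '' K₁ ∩ K₂).Nonempty} with hS
  let F : ℕ ↪ S := Set.Infinite.natEmbedding _ hinf
  let g : ℕ → (X ≃ₜ X) := fun n => (F n).1
  have hpg : ∀ n a, p (g n a) = p a := fun n a => congr_fun (F n).2.1 a
  -- witnesses
  have hw : ∀ n, ∃ a, a ∈ K₁ ∧ (g n) a ∈ K₂ := by
    intro n
    obtain ⟨y, ⟨a, ha, rfl⟩, hy2⟩ := (F n).2.2
    exact ⟨a, ha, hy2⟩
  choose w hw1 hw2 using hw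
  -- convergent subsequences
  obtain ⟨x, hxK, φ, hφ, hxt⟩ := hK₁.tendsto_subseq hw1
  obtain ⟨z, hzK, ψ, hψ, hzt⟩ :=
    hK₂.tendsto_subseq (x := fun n => g (φ n) (w (φ n))) (fun n => hw2 (φ n))
  set σ : ℕ → ℕ := φ ∘ ψ with hσ
  have hσmono : StrictMono σ := hφ.comp hψ
  have hxt' : Tendsto (fun n => w (σ n)) atTop (𝓝 x) := hxt.comp hψ.tendsto_atTop
  have hzt' : Tendsto (fun n => g (σ n) (w (σ n))) atTop (𝓝 z) := hzt
  -- p x = p z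
  have h1 : Tendsto (fun n => p (w (σ n))) atTop (𝓝 (p x)) :=
    (hp.continuous.tendsto x).comp hxt'
  have h2 : Tendsto (fun n => p (w (σ n))) atTop (𝓝 (p z)) := by
    have := (hp.continuous.tendsto z).comp hzt'
    simpa only [Function.comp_def, hpg] using this
  have hpxz : p x = p z := tendsto_nhds_unique h1 h2
  -- chart at z
  obtain ⟨e, hze, hpe⟩ := hp z
  set W : Set X := p ⁻¹' e.target with hW
  have hWopen : IsOpen W := e.open_target.preimage hp.continuous
  have hxW : x ∈ W := by
    show p x ∈ e.target
    rw [hpxz, hpe]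
    exact e.map_source hze
  -- the local inverse composed with p
  set f : X → X := fun a => e.symm (p a) with hf
  have hfC : ContinuousOn f W :=
    e.continuousOn_symm.comp hp.continuous.continuousOn (fun a ha => ha)
  have hpf : ∀ a ∈ W, p (f a) = p a := by
    intro a ha
    have : p a ∈ e.target := ha
    show p (e.symm (p a)) = p a
    rw [show p (e.symm (p a)) = e (e.symm (p a)) from congr_fun hpe _]
    exact e.right_inv this
  -- the connected component
  set C : Set X := connectedComponentIn W x with hC
  have hCopen : IsOpen C := hWopen.connectedComponentIn
  have hxC : x ∈ C := mem_connectedComponentIn hxW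
  have hCsub : C ⊆ W := connectedComponentIn_subset W x
  have hev1 : ∀ᶠ n in atTop, w (σ n) ∈ C :=
    hxt'.eventually_mem (hCopen.mem_nhds hxC)
  have hev2 : ∀ᶠ n in atTop, g (σ n) (w (σ n)) ∈ e.source :=
    hzt'.eventually_mem (e.open_source.mem_nhds hze)
  obtain ⟨N, hN⟩ := (hev1.and hev2).exists_forall_of_atTop
  have sep : IsSeparatedMap p := T2Space.isSeparatedMap p
  have inj : IsLocallyInjective p := hp.isLocallyInjective
  -- key: for n ≥ N, g (σ n) agrees with f on C, hence g (σ n) x = f x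
  have key : ∀ n ≥ N, g (σ n) x = f x := by
    intro n hn
    obtain ⟨hwC, hgV⟩ := hN n hn
    have h₁ : ContinuousOn (g (σ n)) C := (g (σ n)).continuous.continuousOn
    have h₂ : ContinuousOn f C := hfC.mono hCsub
    have he : C.EqOn (p ∘ g (σ n)) (p ∘ f) := by
      intro a ha
      show p (g (σ n) a) = p (f a)
      rw [hpg, hpf a (hCsub ha)]
    have hagree : g (σ n) (w (σ n)) = f (w (σ n)) := by
      have : f (w (σ n)) = e.symm (p (g (σ n) (w (σ n)))) := by
        rw [hpg]
      rw [this]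
      conv_lhs => rw [← e.left_inv hgV]
      rw [hpe]
    exact (sep.eqOn_of_comp_eqOn inj isPreconnected_connectedComponentIn h₁ h₂ he
      hwC hagree) hxC
  -- two distinct deck transformations agree at x, contradiction
  have hx2 : g (σ N) x = g (σ (N + 1)) x := by
    rw [key N le_rfl, key (N + 1) (Nat.le_succ N)]
  have hfun : (g (σ N) : X → X) = g (σ (N + 1)) :=
    sep.eq_of_comp_eq inj (g (σ N)).continuous (g (σ (N + 1))).continuous
      (by rw [(F (σ N)).2.1, (F (σ (N + 1))).2.1]) x hx2
  have : σ N = σ (N + 1) := by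
    apply F.injective
    apply Subtype.ext
    exact Homeomorph.ext (fun a => congr_fun hfun a)
  exact absurd this (hσmono.injective.ne (Nat.lt_succ_self N).ne)
end
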